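/- arXiv:1802.09098 — 5 statements merged into one kernel-verified Lean document; each statement's English description precedes it below -/
import Mathlib

section
/- Under conditional super-uniformity of the null p-values, for every time t ∈ ℕ the expected total testing level spent on nulls dominates the expected number of false rejections: E[Σ_{j ≤ t, j ∈ H⁰} α_j] ≥ E[|H⁰ ∩ R(t)|]. (Proposition 1(a)) -/
open MeasureTheory ProbabilityTheory

/-- The rejection indicator history available just before testing hypothesis `t`:
the indicators `R_j = 1{P_j ≤ α_j}` for `j < t`, encoded as a boolean sequence. -/
noncomputable def rejHistory {Ω : Type*} (P alpha : ℕ → Ω → ℝ) (t : ℕ) (ω : Ω) : ℕ → Bool :=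
  fun j => decide (j < t ∧ P j ω ≤ alpha j ω)

/-- The number of rejections `|R(t)|` among the hypotheses indexed `j ≤ t`. -/
noncomputable def numRejections {Ω : Type*} (P alpha : ℕ → Ω → ℝ) (t : ℕ) (ω : Ω) : ℝ :=
  ∑ j ∈ Finset.Iic t, if P j ω ≤ alpha j ω then (1 : ℝ) else 0

open Classical in
/-- The number of false rejections `|H⁰ ∩ R(t)|` among the hypotheses indexed `j ≤ t`. -/
noncomputable def numFalseRejections {Ω : Type*} (H0 : Set ℕ) (P alpha : ℕ → Ω → ℝ)
    (t : ℕ) (ω : Ω) : ℝ :=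
  ∑ j ∈ Finset.Iic t, if j ∈ H0 ∧ P j ω ≤ alpha j ω then (1 : ℝ) else 0

open Classical in
/-- Proposition 1(a): under conditional super-uniformity of the null p-values,
`E[Σ_{j ≤ t, j ∈ H⁰} α_j] ≥ E[|H⁰ ∩ R(t)|]` for every time `t`. -/
theorem proposition1a {Ω : Type*} [m0 : MeasurableSpace Ω]
    (μ : Measure Ω) [IsProbabilityMeasure μ]
    (P alpha : ℕ → Ω → ℝ) (H0 : Set ℕ)
    (hPmeas : ∀ j, Measurable (P j)) (hP01 : ∀ j ω, P j ω ∈ Set.Icc (0 : ℝ) 1)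
    (hameas : ∀ j, Measurable (alpha j)) (ha01 : ∀ j ω, alpha j ω ∈ Set.Ioo (0 : ℝ) 1)
    -- predictability: `α_t` is a function of the rejection indicators `R_1, ..., R_{t-1}`
    (f : ℕ → (ℕ → Bool) → ℝ)
    (hpred : ∀ t ω, alpha t ω = f t (rejHistory P alpha t ω))
    -- conditional super-uniformity of the nulls: `P(P_t ≤ α_t | F^{t-1}) ≤ α_t` a.s.
    (hsuper : ∀ t ∈ H0, ∀ᵐ ω ∂μ,
      (μ[fun ω' => if P t ω' ≤ alpha t ω' then (1 : ℝ) else 0 |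
          MeasurableSpace.comap (rejHistory P alpha t) inferInstance]) ω ≤ alpha t ω)
    (t : ℕ) :
    ∫ ω, numFalseRejections H0 P alpha t ω ∂μ
      ≤ ∫ ω, (∑ j ∈ Finset.Iic t, if j ∈ H0 then alpha j ω else 0) ∂μ := by
  classical
  -- measurability of the indicator sets
  have hind : ∀ j : ℕ, Measurable fun ω => if P j ω ≤ alpha j ω then (1:ℝ) else 0 := by
    intro j
    exact Measurable.ite (measurableSet_le (hPmeas j) (hameas j)) measurable_const
      measurable_const
  have hindI : ∀ j : ℕ, Integrable (fun ω => if P j ω ≤ alpha j ω then (1:ℝ) else 0) μ := by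
    intro j
    refine (integrable_const (1:ℝ)).mono' (hind j).aestronglyMeasurable ?_
    filter_upwards with ω
    by_cases h : P j ω ≤ alpha j ω <;> simp [h]
  have haI : ∀ j : ℕ, Integrable (alpha j) μ := by
    intro j
    refine (integrable_const (1:ℝ)).mono' (hameas j).aestronglyMeasurable ?_
    filter_upwards with ω
    rw [Real.norm_eq_abs, abs_of_pos (ha01 j ω).1]
    exact (ha01 j ω).2.le
  -- rejHistory is measurable
  have hhist : ∀ j : ℕ, Measurable (rejHistory P alpha j) := by
    intro j
    apply measurable_pi_lambda
    intro k
    have : MeasurableSet {ω : Ω | k < j ∧ P k ω ≤ alpha k ω} :=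
      (MeasurableSet.const _).inter (measurableSet_le (hPmeas k) (hameas k))
    refine measurable_to_countable' fun b => ?_
    cases b
    · convert this.compl using 1
      ext ω; simp [rejHistory, decide_eq_true_eq]
    · convert this using 1
      ext ω; simp [rejHistory, decide_eq_true_eq]
  -- per-term inequality for nulls
  have key : ∀ j ∈ H0,
      ∫ ω, (if P j ω ≤ alpha j ω then (1:ℝ) else 0) ∂μ ≤ ∫ ω, alpha j ω ∂μ := by
    intro j hj
    have hm : MeasurableSpace.comap (rejHistory P alpha j) inferInstance ≤ m0 :=
      (hhist j).comap_le
    haveI : SigmaFinite (μ.trim hm) := by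
      have : IsFiniteMeasure (μ.trim hm) := isFiniteMeasure_trim hm
      infer_instance
    calc ∫ ω, (if P j ω ≤ alpha j ω then (1:ℝ) else 0) ∂μ
        = ∫ ω, (μ[fun ω' => if P j ω' ≤ alpha j ω' then (1:ℝ) else 0 |
            MeasurableSpace.comap (rejHistory P alpha j) inferInstance]) ω ∂μ :=
          (integral_condExp hm).symm
      _ ≤ ∫ ω, alpha j ω ∂μ :=
          integral_mono_ae integrable_condExp (haI j) (hsuper j hj)
  -- assemble
  have lhs_eq : ∀ ω, numFalseRejections H0 P alpha t ω
      = ∑ j ∈ Finset.Iic t, if j ∈ H0 then (if P j ω ≤ alpha j ω then (1:ℝ) else 0) else 0 := by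
    intro ω
    unfold numFalseRejections
    refine Finset.sum_congr rfl fun j _ => ?_
    by_cases h1 : j ∈ H0 <;> by_cases h2 : P j ω ≤ alpha j ω <;> simp [h1, h2]
  simp_rw [lhs_eq]
  rw [integral_finset_sum, integral_finset_sum]
  · refine Finset.sum_le_sum fun j _ => ?_
    by_cases h1 : j ∈ H0
    · simpa [h1] using key j h1
    · simp [h1]
  · intro j _
    by_cases h1 : j ∈ H0 <;> simp [h1, haI j, integrable_zero]
  · intro j _
    by_cases h1 : j ∈ H0 <;> simp [h1, hindI j, integrable_zero]
end

section
/- If the null p-values are independent of each other and of the non-null p-values, each null p-value is super-uniform (P(P_j ≤ u) ≤ u for all u ∈ [0,1]), and the level sequence {α_t} is monotone, then for all t ∈ ℕ the expected oracle FDP estimate dominates the FDR: E[FDP*(t)] ≥ E[FDP(t)] = FDR(t). (Proposition 1(c)) -/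
open MeasureTheory ProbabilityTheory

/-- The false discovery proportion `FDP(t) = |H⁰ ∩ R(t)| / max(|R(t)|, 1)`. -/
noncomputable def FDP {Ω : Type*} (H0 : Set ℕ) (P alpha : ℕ → Ω → ℝ) (t : ℕ) (ω : Ω) : ℝ :=
  numFalseRejections H0 P alpha t ω / max (numRejections P alpha t ω) 1

open Classical in
/-- The oracle FDP estimate `FDP*(t) = (Σ_{j ≤ t, j ∈ H⁰} α_j) / max(|R(t)|, 1)`. -/
noncomputable def FDPstar {Ω : Type*} (H0 : Set ℕ) (P alpha : ℕ → Ω → ℝ)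
    (t : ℕ) (ω : Ω) : ℝ :=
  (∑ j ∈ Finset.Iic t, if j ∈ H0 then alpha j ω else 0) / max (numRejections P alpha t ω) 1

/-- The null p-values `{P_j : j ∈ H⁰}` are independent of each other and of
the non-null p-values: the family of σ-algebras consisting of `σ(P_j)` for each null `j`,
together with the σ-algebra generated by all non-null p-values, is independent. -/
def nullsIndep {Ω : Type*} [MeasurableSpace Ω] (μ : Measure Ω) (H0 : Set ℕ)
    (P : ℕ → Ω → ℝ) : Prop :=
  ProbabilityTheory.iIndep
    (fun i : Option {j : ℕ // j ∈ H0} =>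
      i.elim (⨆ j ∈ H0ᶜ, MeasurableSpace.comap (P j) inferInstance)
        (fun j => MeasurableSpace.comap (P j.1) inferInstance)) μ

/-! For a null index `j`, run the procedure a second time with `P j` replaced by `0`. Since the
levels are monotone in the past rejections, this modified run rejects at least as much, so its
denominator `D̃ = max(|R̃(t)|, 1)` dominates the actual one `D`; and on the event `P j ≤ α j` the two
runs coincide. Both `α j` and `D̃` are functions of the other p-values only, hence independent of
`P j`, and super-uniformity gives `E[1{P j ≤ α j} / D] = E[1{P j ≤ α j} / D̃] ≤ E[α j / D̃] ≤ E[α j / D]`.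
Summing over the null indices `j ≤ t` yields the claim. -/

open Set

theorem integral_indicator_le_integral_mul_of_indepFun {Ω : Type*} [MeasurableSpace Ω]
    {μ : Measure Ω} [IsFiniteMeasure μ] {X A g : Ω → ℝ}
    (hX : Measurable X) (hA : Measurable A) (hg : Measurable g)
    (hind : IndepFun X (fun ω => (A ω, g ω)) μ)
    (hsu : ∀ u ∈ Icc (0 : ℝ) 1, μ {ω | X ω ≤ u} ≤ ENNReal.ofReal u)
    (hA01 : ∀ ω, A ω ∈ Icc (0 : ℝ) 1) (hg0 : ∀ ω, 0 ≤ g ω) (hgi : Integrable g μ) :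
    ∫ ω, {ω | X ω ≤ A ω}.indicator g ω ∂μ ≤ ∫ ω, A ω * g ω ∂μ := by
  set Y : Ω → ℝ × ℝ := fun ω => (A ω, g ω)
  have hY : Measurable Y := hA.prodMk hg
  set h : ℝ × (ℝ × ℝ) → ℝ := {p | p.1 ≤ p.2.1}.indicator fun p => p.2.2
  have hh : Measurable h :=
    measurable_snd.snd.indicator (measurableSet_le measurable_fst measurable_snd.fst)
  have hlaw := (indepFun_iff_map_prod_eq_prod_map_map hX.aemeasurable hY.aemeasurable).1 hind
  have hint : Integrable h ((μ.map X).prod (μ.map Y)) := by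
    rw [← hlaw, integrable_map_measure hh.aestronglyMeasurable (hX.prodMk hY).aemeasurable]
    refine hgi.mono (hh.comp (hX.prodMk hY)).aestronglyMeasurable (ae_of_all _ fun ω => ?_)
    exact norm_indicator_le_norm_self (fun p => p.2.2) (X ω, Y ω)
  have hinner (y : ℝ × ℝ) : ∫ x, h (x, y) ∂μ.map X = (μ.map X).real (Iic y.1) * y.2 :=
    integral_indicator_const (s := Iic y.1) y.2 measurableSet_Iic
  have hbound : ∀ᵐ y ∂μ.map Y, y.1 ∈ Icc (0 : ℝ) 1 ∧ 0 ≤ y.2 := by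
    refine (ae_map_iff hY.aemeasurable ?_).2 (ae_of_all _ fun ω => ⟨hA01 ω, hg0 ω⟩)
    exact (measurableSet_Icc.preimage measurable_fst).inter
      (measurableSet_le measurable_const measurable_snd)
  calc ∫ ω, {ω | X ω ≤ A ω}.indicator g ω ∂μ = ∫ p, h p ∂(μ.map fun ω => (X ω, Y ω)) := by
        rw [integral_map (hX.prodMk hY).aemeasurable hh.aestronglyMeasurable]; rfl
    _ = ∫ y, ∫ x, h (x, y) ∂μ.map X ∂μ.map Y := by rw [hlaw, integral_prod_symm _ hint]
    _ ≤ ∫ y, y.1 * y.2 ∂μ.map Y := by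
        refine integral_mono_ae hint.integral_prod_right ?_ ?_
        · refine (integrable_map_measure (measurable_fst.mul measurable_snd).aestronglyMeasurable
            hY.aemeasurable).2 <| hgi.mono (hA.mul hg).aestronglyMeasurable (ae_of_all _ fun ω => ?_)
          show ‖A ω * g ω‖ ≤ ‖g ω‖
          rw [norm_mul]
          exact mul_le_of_le_one_left (norm_nonneg _)
            (abs_le.2 ⟨by linarith [(hA01 ω).1], (hA01 ω).2⟩)
        · filter_upwards [hbound] with y ⟨hy1, hy2⟩
          rw [hinner, map_measureReal_apply hX measurableSet_Iic]
          exact mul_le_mul_of_nonneg_right (ENNReal.toReal_le_of_le_ofReal hy1.1 (hsu _ hy1)) hy2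
    _ = ∫ ω, A ω * g ω ∂μ :=
        integral_map hY.aemeasurable (measurable_fst.mul measurable_snd).aestronglyMeasurable

theorem integrable_div_max_one {Ω : Type*} [MeasurableSpace Ω] {μ : Measure Ω}
    [IsFiniteMeasure μ] {g N : Ω → ℝ} (hg : Measurable g) (hN : Measurable N)
    (hg01 : ∀ ω, g ω ∈ Icc (0 : ℝ) 1) : Integrable (fun ω => g ω / max (N ω) 1) μ :=
  .of_bound (hg.div (hN.max measurable_const)).aestronglyMeasurable 1 <| ae_of_all _ fun ω => by
    have hD : 1 ≤ max (N ω) 1 := le_max_right _ _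
    rw [Real.norm_eq_abs, abs_of_nonneg (div_nonneg (hg01 ω).1 (by linarith)),
      div_le_one (by linarith)]
    linarith [(hg01 ω).2]

abbrev sigmaExcept {Ω : Type*} (P : ℕ → Ω → ℝ) (j : ℕ) : MeasurableSpace Ω :=
  ⨆ k ∈ ({j}ᶜ : Set ℕ), MeasurableSpace.comap (P k) inferInstance

theorem sigmaExcept_le {Ω : Type*} [m0 : MeasurableSpace Ω] {P : ℕ → Ω → ℝ}
    (hPmeas : ∀ k, Measurable (P k)) (j : ℕ) : sigmaExcept P j ≤ m0 :=
  iSup₂_le fun k _ => (hPmeas k).comap_le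

theorem measurable_update_sigmaExcept {Ω : Type*} (P : ℕ → Ω → ℝ) (j k : ℕ) (c : ℝ) :
    Measurable[sigmaExcept P j] fun ω => Function.update (fun i => P i ω) j c k := by
  rcases eq_or_ne k j with rfl | hk
  · simp
  · simp only [Function.update_of_ne hk]
    exact (comap_measurable (P k)).mono
      (le_iSup₂ (f := fun k (_ : k ∈ ({j}ᶜ : Set ℕ)) => MeasurableSpace.comap (P k) _) k hk) le_rfl

theorem nullsIndep.indep_sigmaExcept {Ω : Type*} [MeasurableSpace Ω] {μ : Measure Ω}
    {H0 : Set ℕ} {P : ℕ → Ω → ℝ} (hindep : nullsIndep μ H0 P) (hPmeas : ∀ k, Measurable (P k))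
    {j : ℕ} (hj : j ∈ H0) :
    Indep (MeasurableSpace.comap (P j) inferInstance) (sigmaExcept P j) μ := by
  set m : Option {k // k ∈ H0} → MeasurableSpace Ω := fun i =>
    i.elim (⨆ k ∈ H0ᶜ, MeasurableSpace.comap (P k) inferInstance)
      fun k => MeasurableSpace.comap (P k.1) inferInstance
  have hm : ∀ i, m i ≤ ‹_› := by
    rintro (_ | k)
    · exact iSup₂_le fun k _ => (hPmeas k).comap_le
    · exact (hPmeas k.1).comap_le
  refine indep_of_indep_of_le_right
    (indep_of_indep_of_le_left (indep_iSup_of_disjoint hm hindep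
      (disjoint_compl_right (a := {some ⟨j, hj⟩})))
    (le_iSup₂_of_le (some ⟨j, hj⟩) rfl le_rfl)) (iSup₂_le fun k hk => ?_)
  by_cases hk0 : k ∈ H0
  · exact le_iSup₂_of_le (some ⟨k, hk0⟩) (by simpa using hk) le_rfl
  · exact le_iSup₂_of_le none (by simp) (le_iSup₂_of_le (f := fun k (_ : k ∈ H0ᶜ) =>
      MeasurableSpace.comap (P k) inferInstance) k hk0 le_rfl)

namespace OnlineTesting

variable (f : ℕ → (ℕ → Bool) → ℝ)

/-- `history f q n k` is the rejection indicator of hypothesis `k < n` (and `false` for `k ≥ n`)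
when the p-values are `q` and hypothesis `k` is tested at level `f k (history f q k)`. -/
noncomputable def history (q : ℕ → ℝ) : ℕ → ℕ → Bool
  | 0 => fun _ => false
  | n + 1 => Function.update (history q n) n (decide (q n ≤ f n (history q n)))

variable {f}

theorem history_eq_rejHistory {Ω : Type*} {P alpha : ℕ → Ω → ℝ}
    (hpred : ∀ t ω, alpha t ω = f t (rejHistory P alpha t ω)) (ω : Ω) (n : ℕ) :
    history f (fun k => P k ω) n = rejHistory P alpha n ω := by
  induction n with
  | zero => funext k; simp [history, rejHistory]
  | succ n ih =>
    funext k
    rw [history, ih, ← hpred, Function.update_apply]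
    rcases lt_trichotomy k n with hk | rfl | hk
    · simp [rejHistory, hk, hk.ne, Nat.lt_succ_of_lt hk]
    · simp [rejHistory]
    · have h1 : ¬k < n := by omega
      have h2 : ¬k < n + 1 := by omega
      simp [rejHistory, hk.ne', h1, h2]

theorem history_mono (hmono : ∀ n, Monotone (f n)) {q q' : ℕ → ℝ} (hq : q' ≤ q) (n : ℕ) :
    history f q n ≤ history f q' n := by
  induction n with
  | zero => exact le_rfl
  | succ n ih =>
    intro k
    simp only [history, Function.update_apply]
    split_ifs
    · simp only [Bool.le_iff_imp, decide_eq_true_eq]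
      exact fun h => (hq n).trans (h.trans (hmono n ih))
    · exact ih k

theorem history_congr {q q' : ℕ → ℝ} {n : ℕ}
    (h : ∀ k < n, (q' k ≤ f k (history f q k) ↔ q k ≤ f k (history f q k))) :
    history f q' n = history f q n := by
  induction n with
  | zero => rfl
  | succ n ih =>
    have ih' := ih fun k hk => h k (Nat.lt_succ_of_lt hk)
    rw [history, history, ih', decide_eq_decide.2 (h n (Nat.lt_succ_self n))]

theorem history_update_of_le (q : ℕ → ℝ) {j n : ℕ} (hn : n ≤ j) (c : ℝ) :
    history f (Function.update q j c) n = history f q n :=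
  history_congr fun k hk => by rw [Function.update_of_ne (by omega)]

theorem history_update_zero_of_rejected {q : ℕ → ℝ} {j : ℕ} (hq : 0 ≤ q j)
    (hrej : q j ≤ f j (history f q j)) (n : ℕ) :
    history f (Function.update q j 0) n = history f q n := by
  refine history_congr fun k _ => ?_
  rcases eq_or_ne k j with rfl | hk
  · simpa using iff_of_true (hq.trans hrej) hrej
  · rw [Function.update_of_ne hk]

theorem measurable_comp_history {Ω : Type*} {m : MeasurableSpace Ω}
    {q : Ω → ℕ → ℝ} (hq : ∀ k, Measurable fun ω => q ω k) (n : ℕ) (φ : (ℕ → Bool) → ℝ) :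
    Measurable fun ω => φ (history f (q ω) n) := by
  induction n generalizing φ with
  | zero => simp only [history]; exact measurable_const
  | succ n ih =>
    have hsplit : ∀ ω, φ (history f (q ω) (n + 1)) =
        if q ω n ≤ f n (history f (q ω) n) then φ (Function.update (history f (q ω) n) n true)
        else φ (Function.update (history f (q ω) n) n false) := by
      intro ω; rw [history]; split_ifs with h <;> simp [h]
    simp only [hsplit]
    exact Measurable.ite (measurableSet_le (hq n) (ih (f n)))
      (ih fun h => φ (Function.update h n true)) (ih fun h => φ (Function.update h n false))

def rejCount (t : ℕ) (h : ℕ → Bool) : ℝ :=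
  ∑ k ∈ Finset.Iic t, if h k then 1 else 0

theorem rejCount_mono (t : ℕ) {h h' : ℕ → Bool} (hle : h ≤ h') : rejCount t h ≤ rejCount t h' := by
  refine Finset.sum_le_sum fun k _ => ?_
  by_cases hk : h k
  · simp [hk, Bool.le_iff_imp.1 (hle k) hk]
  · simp only [hk, Bool.false_eq_true, if_false]
    split_ifs <;> norm_num

theorem numRejections_eq_rejCount {Ω : Type*} {P alpha : ℕ → Ω → ℝ}
    (hpred : ∀ t ω, alpha t ω = f t (rejHistory P alpha t ω)) (t : ℕ) (ω : Ω) :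
    numRejections P alpha t ω = rejCount t (history f (fun k => P k ω) (t + 1)) := by
  rw [history_eq_rejHistory hpred, numRejections, rejCount]
  refine Finset.sum_congr rfl fun k hk => ?_
  simp [rejHistory, Nat.lt_succ_of_le (Finset.mem_Iic.1 hk)]

theorem measurable_level {Ω : Type*} [MeasurableSpace Ω] {P alpha : ℕ → Ω → ℝ}
    (hpred : ∀ t ω, alpha t ω = f t (rejHistory P alpha t ω)) (hPmeas : ∀ j, Measurable (P j))
    (j : ℕ) : Measurable (alpha j) := by
  convert measurable_comp_history (f := f) (fun k => hPmeas k) j (f j) using 1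
  funext ω
  rw [hpred, history_eq_rejHistory hpred]

theorem measurable_numRejections {Ω : Type*} [MeasurableSpace Ω] {P alpha : ℕ → Ω → ℝ}
    (hpred : ∀ t ω, alpha t ω = f t (rejHistory P alpha t ω)) (hPmeas : ∀ j, Measurable (P j))
    (t : ℕ) : Measurable (numRejections P alpha t) := by
  convert measurable_comp_history (f := f) (fun k => hPmeas k) (t + 1) (rejCount t) using 1
  exact funext (numRejections_eq_rejCount hpred t)

theorem integral_rejected_div_le {Ω : Type*} [MeasurableSpace Ω] {μ : Measure Ω}
    [IsProbabilityMeasure μ] {P alpha : ℕ → Ω → ℝ} (hPmeas : ∀ k, Measurable (P k))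
    (hP0 : ∀ k ω, 0 ≤ P k ω) (ha01 : ∀ k ω, alpha k ω ∈ Icc (0 : ℝ) 1)
    (hpred : ∀ t ω, alpha t ω = f t (rejHistory P alpha t ω)) (hmono : ∀ n, Monotone (f n))
    {j : ℕ} (hindep : Indep (MeasurableSpace.comap (P j) inferInstance) (sigmaExcept P j) μ)
    (hnull : ∀ u ∈ Icc (0 : ℝ) 1, μ {ω | P j ω ≤ u} ≤ ENNReal.ofReal u) (t : ℕ) :
    ∫ ω, (if P j ω ≤ alpha j ω then 1 else 0) / max (numRejections P alpha t ω) 1 ∂μ ≤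
      ∫ ω, alpha j ω / max (numRejections P alpha t ω) 1 ∂μ := by
  set q : Ω → ℕ → ℝ := fun ω => Function.update (fun k => P k ω) j 0
  set D : Ω → ℝ := fun ω => max (numRejections P alpha t ω) 1
  set D' : Ω → ℝ := fun ω => max (rejCount t (history f (q ω) (t + 1))) 1
  have hq : ∀ k, Measurable[sigmaExcept P j] fun ω => q ω k :=
    fun k => measurable_update_sigmaExcept P j k 0
  have hlevel : ∀ ω, alpha j ω = f j (history f (q ω) j) := fun ω => by
    rw [history_update_of_le _ le_rfl, history_eq_rejHistory hpred, ← hpred]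
  have hlevel_meas : Measurable[sigmaExcept P j] (alpha j) := by
    convert measurable_comp_history hq j (f j) using 1
    exact funext hlevel
  have hN'_meas : Measurable[sigmaExcept P j] fun ω => rejCount t (history f (q ω) (t + 1)) :=
    measurable_comp_history hq (t + 1) (rejCount t)
  have hD'_meas : Measurable[sigmaExcept P j] fun ω => 1 / D' ω :=
    measurable_const.div (hN'_meas.max measurable_const)
  have hD_le : ∀ ω, D ω ≤ D' ω := fun ω => by
    refine max_le_max ?_ le_rfl
    rw [numRejections_eq_rejCount hpred]
    refine rejCount_mono t (history_mono hmono (fun k => ?_) _)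
    rcases eq_or_ne k j with rfl | hk
    · simpa [q] using hP0 k ω
    · simp [q, hk]
  have hD'_eq : ∀ ω, P j ω ≤ alpha j ω → D' ω = D ω := fun ω hrej => by
    have hrej' : P j ω ≤ f j (history f (fun k => P k ω) j) := by
      rwa [history_eq_rejHistory hpred, ← hpred]
    simp only [D, D', q, history_update_zero_of_rejected (q := fun k => P k ω) (hP0 j ω) hrej',
      numRejections_eq_rejCount hpred]
  have hG := sigmaExcept_le hPmeas j
  calc ∫ ω, (if P j ω ≤ alpha j ω then 1 else 0) / D ω ∂μ
      = ∫ ω, {ω | P j ω ≤ alpha j ω}.indicator (fun ω => 1 / D' ω) ω ∂μ := by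
        refine integral_congr_ae (ae_of_all _ fun ω => ?_)
        by_cases hrej : P j ω ≤ alpha j ω
        · simp [hrej, hD'_eq ω hrej]
        · simp [hrej]
    _ ≤ ∫ ω, alpha j ω * (1 / D' ω) ∂μ := by
        refine integral_indicator_le_integral_mul_of_indepFun (hPmeas j) (hlevel_meas.mono hG le_rfl)
          (hD'_meas.mono hG le_rfl) ?_ hnull (ha01 j) (fun ω => by positivity) ?_
        · exact (IndepFun_iff_Indep _ _ _).2
            (indep_of_indep_of_le_right hindep (hlevel_meas.prodMk hD'_meas).comap_le)
        · exact integrable_div_max_one measurable_const (hN'_meas.mono hG le_rfl)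
            fun _ => ⟨zero_le_one, le_rfl⟩
    _ ≤ ∫ ω, alpha j ω / D ω ∂μ := by
        refine integral_mono_of_nonneg (ae_of_all _ fun ω => ?_) ?_ (ae_of_all _ fun ω => ?_)
        · exact mul_nonneg (ha01 j ω).1 (by positivity)
        · exact integrable_div_max_one (measurable_level hpred hPmeas j)
            (measurable_numRejections hpred hPmeas t) (ha01 j)
        · show alpha j ω * (1 / D' ω) ≤ alpha j ω / D ω
          rw [mul_one_div]
          exact div_le_div_of_nonneg_left (ha01 j ω).1 (by positivity) (hD_le ω)

end OnlineTesting

theorem proposition1c_general {Ω : Type*} [m0 : MeasurableSpace Ω]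
    (μ : Measure Ω) [IsProbabilityMeasure μ]
    (P alpha : ℕ → Ω → ℝ) (H0 : Set ℕ)
    (hPmeas : ∀ j, Measurable (P j)) (hP01 : ∀ j ω, P j ω ∈ Set.Icc (0 : ℝ) 1)
    (ha01 : ∀ j ω, alpha j ω ∈ Set.Ioo (0 : ℝ) 1)
    -- independence of the nulls from each other and from the non-nulls
    (hindep : nullsIndep μ H0 P)
    -- marginal super-uniformity of each null p-value
    (hnull : ∀ j ∈ H0, ∀ u ∈ Set.Icc (0 : ℝ) 1, μ {ω | P j ω ≤ u} ≤ ENNReal.ofReal u)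
    -- predictability and monotonicity of the level sequence
    (f : ℕ → (ℕ → Bool) → ℝ)
    (hpred : ∀ t ω, alpha t ω = f t (rejHistory P alpha t ω))
    (hmono : ∀ t, Monotone (f t))
    (t : ℕ) :
    ∫ ω, FDP H0 P alpha t ω ∂μ ≤ ∫ ω, FDPstar H0 P alpha t ω ∂μ := by
  have ha01' : ∀ j ω, alpha j ω ∈ Icc (0 : ℝ) 1 := fun j ω => Ioo_subset_Icc_self (ha01 j ω)
  have hα := OnlineTesting.measurable_level hpred hPmeas
  have hint {g : Ω → ℝ} (hg : Measurable g) (hg01 : ∀ ω, g ω ∈ Icc (0 : ℝ) 1) :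
      Integrable (fun ω => g ω / max (numRejections P alpha t ω) 1) μ :=
    integrable_div_max_one hg (OnlineTesting.measurable_numRejections hpred hPmeas t) hg01
  simp only [FDP, FDPstar, numFalseRejections, Finset.sum_div]
  rw [integral_finsetSum _ fun j _ => hint ?_ ?_, integral_finsetSum _ fun j _ => hint ?_ ?_]
  · refine Finset.sum_le_sum fun j _ => ?_
    by_cases hj : j ∈ H0
    · simpa [hj] using OnlineTesting.integral_rejected_div_le hPmeas (fun k ω => (hP01 k ω).1)
        ha01' hpred hmono (hindep.indep_sigmaExcept hPmeas hj) (hnull j hj) t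
    · simp [hj]
  · exact Measurable.ite (MeasurableSet.const _) (hα j) measurable_const
  · intro ω; split_ifs <;> simp [ha01' j ω]
  · exact Measurable.ite ((MeasurableSet.const _).inter (measurableSet_le (hPmeas j) (hα j)))
      measurable_const measurable_const
  · intro ω; split_ifs <;> simp

/-- Proposition 1(c): if the null p-values are independent of each other and of the
non-nulls, each null p-value is super-uniform, and the level sequence is monotone,
then `E[FDP*(t)] ≥ E[FDP(t)] = FDR(t)` for all `t`. -/
theorem proposition1c {Ω : Type*} [m0 : MeasurableSpace Ω]
    (μ : Measure Ω) [IsProbabilityMeasure μ]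
    (P alpha : ℕ → Ω → ℝ) (H0 : Set ℕ)
    (hPmeas : ∀ j, Measurable (P j)) (hP01 : ∀ j ω, P j ω ∈ Set.Icc (0 : ℝ) 1)
    (hameas : ∀ j, Measurable (alpha j)) (ha01 : ∀ j ω, alpha j ω ∈ Set.Ioo (0 : ℝ) 1)
    -- independence of the nulls from each other and from the non-nulls
    (hindep : nullsIndep μ H0 P)
    -- marginal super-uniformity of each null p-value
    (hnull : ∀ j ∈ H0, ∀ u ∈ Set.Icc (0 : ℝ) 1, μ {ω | P j ω ≤ u} ≤ ENNReal.ofReal u)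
    -- predictability and monotonicity of the level sequence
    (f : ℕ → (ℕ → Bool) → ℝ)
    (hpred : ∀ t ω, alpha t ω = f t (rejHistory P alpha t ω))
    (hmono : ∀ t, Monotone (f t))
    (t : ℕ) :
    ∫ ω, FDP H0 P alpha t ω ∂μ ≤ ∫ ω, FDPstar H0 P alpha t ω ∂μ :=
  proposition1c_general (m0 := m0) μ P alpha H0 hPmeas hP01 ha01 hindep hnull f hpred hmono t
end

section
/- Reverse super-uniformity (first inequality of Lemma 2): under independence of the p-values P_1,...,P_T, monotonicity of the rules f_t and g_t, and super-uniformity of each null p-value, for any coordinatewise non-decreasing function g: {0,1}^T → (0,∞) and any t ≤ T with t ∈ H⁰, one has E[α_t·1{P_t > λ_t}/((1−λ_t)·g(R_{1:T})) | F^{t-1}] ≥ E[α_t/g(R_{1:T}) | F^{t-1}] almost surely. -/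
open MeasureTheory ProbabilityTheory

/-- The rejection-and-candidacy indicator history available just before testing hypothesis `t`:
the pair of indicators `R_j = 1{P_j ≤ α_j}` and `C_j = 1{P_j ≤ λ_j}` for `j < t`,
encoded as a pair of boolean sequences. -/
noncomputable def history {Ω : Type*} (P alpha lam : ℕ → Ω → ℝ) (t : ℕ) (ω : Ω) :
    (ℕ → Bool) × (ℕ → Bool) :=
  (fun j => decide (j < t ∧ P j ω ≤ alpha j ω), fun j => decide (j < t ∧ P j ω ≤ lam j ω))

/-- The full vector of rejection indicators `R_{1:T}`, encoded as a boolean sequence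
supported on the indices `j < T`. -/
noncomputable def rejVector {Ω : Type*} (P alpha : ℕ → Ω → ℝ) (T : ℕ) (ω : Ω) : ℕ → Bool :=
  fun j => decide (j < T ∧ P j ω ≤ alpha j ω)

/-! Let `R̃` be the rejection vector obtained by replaying the procedure with hypothesis `t`
forced to be neither rejected nor a candidate. Monotonicity of the rules gives `R̃ ≤ R`, with
equality on `{P_t > λ_t}`, and `R̃` is a function of the p-values other than `P_t`. On an atom
`A` of `F^{t-1}` the levels `α_t = a` and `λ_t = l` are constant, and
`W = 1_A · a / ((1 - l) g(R̃))` is independent of `P_t`, so by super-uniformity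
`∫_A α_t / g(R) ≤ (1 - l) E[W] ≤ P(P_t > l) E[W] = E[W 1{P_t > l}]`, and the last term is
`∫_A α_t 1{P_t > λ_t} / ((1 - λ_t) g(R))`. As `F^{t-1}` has finitely many atoms, summing over
them compares the conditional expectations. -/

open Set

theorem finite_range_prodMk {α β γ : Type*} {e₁ : α → β} {e₂ : α → γ}
    (h₁ : (range e₁).Finite) (h₂ : (range e₂).Finite) :
    (range fun a => (e₁ a, e₂ a)).Finite :=
  (h₁.prod h₂).subset (range_subset_iff.2 fun a => ⟨mem_range_self a, mem_range_self a⟩)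

section FiniteRange

variable {α β γ : Type*} [MeasurableSpace α] [MeasurableSpace β] [MeasurableSpace γ]
  [MeasurableSingletonClass β] {e : α → β}

theorem Measurable.comp_of_finite_range (he : Measurable e) (hfin : (range e).Finite)
    (F : β → γ) : Measurable fun a => F (e a) :=
  have := hfin.to_subtype
  (measurable_of_finite fun b : range e => F b).comp he.rangeFactorization

theorem Measurable.integrable_comp_of_finite_range {μ : Measure α} [IsFiniteMeasure μ]
    (he : Measurable e) (hfin : (range e).Finite) (F : β → ℝ) :
    Integrable (fun a => F (e a)) μ := by
  obtain ⟨C, hC⟩ := (hfin.image fun b => ‖F b‖).bddAbove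
  exact .of_bound (he.comp_of_finite_range hfin F).aestronglyMeasurable C
    (ae_of_all _ fun a => hC (mem_image_of_mem _ (mem_range_self a)))

end FiniteRange

section CondExp

variable {Ω β : Type*} {m m0 : MeasurableSpace Ω} {μ : Measure Ω} [IsFiniteMeasure μ]
  {f g : Ω → ℝ}

theorem condExp_le_condExp_of_forall_setIntegral_le (hm : m ≤ m0) (hf : Integrable f μ)
    (hg : Integrable g μ)
    (hfg : ∀ s, MeasurableSet[m] s → ∫ ω in s, f ω ∂μ ≤ ∫ ω in s, g ω ∂μ) :
    μ[f | m] ≤ᵐ[μ] μ[g | m] := by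
  refine ae_le_of_ae_le_trim (hm := hm) (ae_le_of_forall_setIntegral_le
    (integrable_condExp.trim hm stronglyMeasurable_condExp)
    (integrable_condExp.trim hm stronglyMeasurable_condExp) fun s hs _ => ?_)
  rw [← setIntegral_trim hm stronglyMeasurable_condExp hs,
    ← setIntegral_trim hm stronglyMeasurable_condExp hs, setIntegral_condExp hm hf hs,
    setIntegral_condExp hm hg hs]
  exact hfg s hs

theorem condExp_comap_le_of_forall_fiber [MeasurableSpace β] [MeasurableSingletonClass β]
    {e : Ω → β} (he : Measurable e) (hfin : (range e).Finite) (hf : Integrable f μ)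
    (hg : Integrable g μ)
    (hfiber : ∀ ω, ∫ x in e ⁻¹' {e ω}, f x ∂μ ≤ ∫ x in e ⁻¹' {e ω}, g x ∂μ) :
    μ[f | MeasurableSpace.comap e inferInstance] ≤ᵐ[μ]
      μ[g | MeasurableSpace.comap e inferInstance] := by
  refine condExp_le_condExp_of_forall_setIntegral_le he.comap_le hf hg ?_
  classical
  rintro _ ⟨B, -, rfl⟩
  set S := {b ∈ hfin.toFinset | b ∈ B}
  have hB : e ⁻¹' B = ⋃ b ∈ S, e ⁻¹' {b} := by ext; simp [S]
  have hdisj : (S : Set β).PairwiseDisjoint fun b => e ⁻¹' {b} := pairwiseDisjoint_fiber e _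
  have hmeas : ∀ b ∈ S, MeasurableSet (e ⁻¹' {b}) := fun b _ => he (measurableSet_singleton b)
  rw [hB, integral_biUnion_finset S hmeas hdisj fun _ _ => hf.integrableOn,
    integral_biUnion_finset S hmeas hdisj fun _ _ => hg.integrableOn]
  refine Finset.sum_le_sum fun b hb => ?_
  obtain ⟨ω, rfl⟩ : b ∈ range e := by simpa [S] using (Finset.mem_filter.1 hb).1
  exact hfiber ω

end CondExp

section Independence

variable {Ω : Type*} [MeasurableSpace Ω] {μ : Measure Ω}

theorem ProbabilityTheory.iIndepFun.indepFun_comp_of_dependsOn {T t : ℕ} (ht : t < T)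
    {X : ℕ → Ω → ℝ} (hX : ∀ j, Measurable (X j)) (hind : iIndepFun (fun i : Fin T => X i) μ)
    {φ : (ℕ → ℝ) → ℝ} (hφ : Measurable φ) (hdep : DependsOn φ {j | j < T ∧ j ≠ t})
    {ζ : ℝ → ℝ} (hζ : Measurable ζ) :
    IndepFun (fun ω => φ fun j => X j ω) (fun ω => ζ (X t ω)) μ := by
  set t' : Fin T := ⟨t, ht⟩
  set S := Finset.univ.erase t'
  have hST := hind.indepFun_finset S {t'} (by simp [S]) fun i => hX i
  let extend (y : S → ℝ) (j : ℕ) : ℝ :=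
    if h : j < T ∧ j ≠ t then y ⟨⟨j, h.1⟩, by simp [S, t', Fin.ext_iff, h.2]⟩ else 0
  have hextend : Measurable extend := measurable_pi_lambda _ fun j => by
    by_cases h : j < T ∧ j ≠ t
    · simpa [extend, h] using measurable_pi_apply _
    · simp [extend, h]
  convert hST.comp (hφ.comp hextend)
    (hζ.comp (measurable_pi_apply ⟨t', Finset.mem_singleton_self t'⟩)) using 1
  · funext ω
    exact hdep fun j hj => by simp [extend, hj.1, hj.2]
  · rfl

variable [IsProbabilityMeasure μ]

theorem one_sub_le_measureReal_lt {Y : Ω → ℝ} (hY : Measurable Y) {l : ℝ}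
    (hsu : μ {ω | Y ω ≤ l} ≤ ENNReal.ofReal l) (hl : 0 ≤ l) :
    1 - l ≤ μ.real {ω | l < Y ω} := by
  have hcompl : {ω | l < Y ω} = {ω | Y ω ≤ l}ᶜ := by ext; simp
  rw [hcompl, probReal_compl_eq_one_sub (measurableSet_le hY measurable_const)]
  have := ENNReal.toReal_mono ENNReal.ofReal_ne_top hsu
  rw [ENNReal.toReal_ofReal hl] at this
  exact sub_le_sub_left this 1

theorem one_sub_mul_integral_le_integral_mul_ite {W Y : Ω → ℝ} (hW : Integrable W μ)
    (hW0 : 0 ≤ W) (hY : Measurable Y) {l : ℝ}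
    (hind : IndepFun W (fun ω => if l < Y ω then (1 : ℝ) else 0) μ)
    (hsu : μ {ω | Y ω ≤ l} ≤ ENNReal.ofReal l) (hl : 0 ≤ l) :
    (1 - l) * ∫ ω, W ω ∂μ ≤ ∫ ω, W ω * (if l < Y ω then 1 else 0) ∂μ := by
  have hZ : (fun ω => if l < Y ω then (1 : ℝ) else 0) = {ω | l < Y ω}.indicator 1 := by
    ext; simp [Set.indicator_apply]
  have hZmeas : MeasurableSet {ω | l < Y ω} := measurableSet_lt measurable_const hY
  rw [← Pi.mul_def, hind.integral_mul_eq_mul_integral hW.aestronglyMeasurable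
    (by rw [hZ]; exact (measurable_const.indicator hZmeas).aestronglyMeasurable), hZ,
    integral_indicator_one hZmeas, mul_comm]
  exact mul_le_mul_of_nonneg_left (one_sub_le_measureReal_lt hY hsu hl) (integral_nonneg hW0)

theorem setIntegral_le_setIntegral_of_indepFun {A : Set Ω} (hA : MeasurableSet A)
    {Y : Ω → ℝ} (hY : Measurable Y) {l : ℝ} (hl : 0 ≤ l)
    (hsu : μ {ω | Y ω ≤ l} ≤ ENNReal.ofReal l) {W U V : Ω → ℝ} (hW : Integrable W μ)
    (hW0 : 0 ≤ W) (hWA : ∀ ω ∉ A, W ω = 0)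
    (hind : IndepFun W (fun ω => if l < Y ω then (1 : ℝ) else 0) μ) (hU0 : 0 ≤ U)
    (hUW : ∀ ω ∈ A, U ω ≤ (1 - l) * W ω)
    (hVW : ∀ ω ∈ A, V ω = W ω * if l < Y ω then 1 else 0) :
    ∫ ω in A, U ω ∂μ ≤ ∫ ω in A, V ω ∂μ :=
  calc ∫ ω in A, U ω ∂μ
      ≤ ∫ ω in A, (1 - l) * W ω ∂μ :=
        integral_mono_of_nonneg (ae_of_all _ hU0) (hW.const_mul _).integrableOn
          ((ae_restrict_iff' hA).2 (ae_of_all _ hUW))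
    _ = (1 - l) * ∫ ω, W ω ∂μ := by
        rw [integral_const_mul, setIntegral_eq_integral_of_forall_compl_eq_zero hWA]
    _ ≤ ∫ ω, W ω * (if l < Y ω then 1 else 0) ∂μ :=
        one_sub_mul_integral_le_integral_mul_ite hW hW0 hY hind hsu hl
    _ = ∫ ω in A, V ω ∂μ := by
        rw [← setIntegral_eq_integral_of_forall_compl_eq_zero fun ω hω => by
          rw [hWA ω hω, zero_mul]]
        exact setIntegral_congr_fun hA fun ω hω => (hVW ω hω).symm

end Independence

def historiesBefore (s : ℕ) : Set ((ℕ → Bool) × (ℕ → Bool)) :=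
  {h | ∀ j, s ≤ j → h.1 j = false ∧ h.2 j = false}

theorem historiesBefore_finite (s : ℕ) : (historiesBefore s).Finite := by
  refine Finite.of_finite_image (f := fun h (i : Fin s) => (h.1 i, h.2 i)) (toFinite _) ?_
  intro h hh h' hh' heq
  have hcoord (j : ℕ) : h.1 j = h'.1 j ∧ h.2 j = h'.2 j := by
    by_cases hj : j < s
    · simpa using congrFun heq ⟨j, hj⟩
    · have hj' := not_lt.1 hj
      exact ⟨(hh j hj').1.trans (hh' j hj').1.symm, (hh j hj').2.trans (hh' j hj').2.symm⟩
  exact Prod.ext (funext fun j => (hcoord j).1) (funext fun j => (hcoord j).2)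

theorem history_mem_historiesBefore {Ω : Type*} (P alpha lam : ℕ → Ω → ℝ) (s : ℕ) (ω : Ω) :
    history P alpha lam s ω ∈ historiesBefore s := fun j hj => by
  simp [history, not_lt.2 hj]

theorem finite_range_history {Ω : Type*} (P alpha lam : ℕ → Ω → ℝ) (s : ℕ) :
    (range (history P alpha lam s)).Finite :=
  (historiesBefore_finite s).subset (range_subset_iff.2 (history_mem_historiesBefore P alpha lam s))

/-- The history obtained by re-running the rules `f`, `g'` on the p-values `x`, except that the
hypotheses in `M` are forced to be neither rejected nor candidates. -/
noncomputable def replayHistory (f g' : ℕ → (ℕ → Bool) × (ℕ → Bool) → ℝ) (M : Set ℕ)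
    (x : ℕ → ℝ) : ℕ → (ℕ → Bool) × (ℕ → Bool)
  | s =>
    open Classical in
    (fun j => if _ : j < s then decide (j ∉ M ∧ x j ≤ f j (replayHistory f g' M x j)) else false,
     fun j => if _ : j < s then decide (j ∉ M ∧ x j ≤ g' j (replayHistory f g' M x j)) else false)
  termination_by s => s

namespace replayHistory

variable {f g' : ℕ → (ℕ → Bool) × (ℕ → Bool) → ℝ} {M : Set ℕ} {x : ℕ → ℝ}

open Classical in
theorem fst_apply (s j : ℕ) : (replayHistory f g' M x s).1 j =
    decide (j < s ∧ j ∉ M ∧ x j ≤ f j (replayHistory f g' M x j)) := by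
  rw [replayHistory]
  by_cases hj : j < s <;> simp [hj]

open Classical in
theorem snd_apply (s j : ℕ) : (replayHistory f g' M x s).2 j =
    decide (j < s ∧ j ∉ M ∧ x j ≤ g' j (replayHistory f g' M x j)) := by
  rw [replayHistory]
  by_cases hj : j < s <;> simp [hj]

theorem mem_historiesBefore (s : ℕ) : replayHistory f g' M x s ∈ historiesBefore s :=
  fun j hj => by simp [fst_apply, snd_apply, not_lt.2 hj]

theorem finite_range (s : ℕ) : (range fun x => replayHistory f g' M x s).Finite :=
  (historiesBefore_finite s).subset (range_subset_iff.2 fun _ => mem_historiesBefore s)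

theorem antitone_mask (hf : ∀ s, Monotone (f s)) (hg' : ∀ s, Monotone (g' s)) {M' : Set ℕ}
    (hM : M ⊆ M') (s : ℕ) : replayHistory f g' M' x s ≤ replayHistory f g' M x s := by
  induction s using Nat.strong_induction_on with
  | _ s ih =>
    refine ⟨fun j => ?_, fun j => ?_⟩
    all_goals
      simp only [fst_apply, snd_apply, Bool.le_iff_imp, decide_eq_true_eq]
      rintro ⟨hj, hjM, hx⟩
    · exact ⟨hj, fun h => hjM (hM h), hx.trans (hf j (ih j hj))⟩
    · exact ⟨hj, fun h => hjM (hM h), hx.trans (hg' j (ih j hj))⟩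

theorem dependsOn (s : ℕ) :
    DependsOn (fun x => replayHistory f g' M x s) {j | j < s ∧ j ∉ M} := by
  induction s using Nat.strong_induction_on with
  | _ s ih =>
    intro x y hxy
    have hrec (j : ℕ) (hj : j < s) : replayHistory f g' M x j = replayHistory f g' M y j :=
      ih j hj fun i hi => hxy i ⟨hi.1.trans hj, hi.2⟩
    refine Prod.ext (funext fun j => ?_) (funext fun j => ?_)
    all_goals
      simp only [fst_apply, snd_apply]
      by_cases hj : j < s ∧ j ∉ M
      · rw [hrec j hj.1, hxy j hj]
      · simp only [← and_assoc, hj, false_and]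

open Classical in
theorem measurable (s : ℕ) : Measurable fun x : ℕ → ℝ => replayHistory f g' M x s := by
  induction s using Nat.strong_induction_on with
  | _ s ih =>
    have hcoord (j : ℕ) (F : (ℕ → Bool) × (ℕ → Bool) → ℝ) : Measurable fun x : ℕ → ℝ =>
        decide (j < s ∧ j ∉ M ∧ x j ≤ F (replayHistory f g' M x j)) := by
      refine measurable_to_bool ?_
      by_cases hj : j < s ∧ j ∉ M
      · convert measurableSet_le (measurable_pi_apply j)
          ((ih j hj.1).comp_of_finite_range (finite_range j) F) using 1
        ext x
        simp [hj]
      · simp [← and_assoc, hj]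
    exact (measurable_pi_lambda _ fun j => by simpa only [fst_apply] using hcoord j (f j)).prod
      (measurable_pi_lambda _ fun j => by simpa only [snd_apply] using hcoord j (g' j))

end replayHistory

section Predictable

variable {Ω : Type*} {P alpha lam : ℕ → Ω → ℝ} {f g' : ℕ → (ℕ → Bool) × (ℕ → Bool) → ℝ}

theorem replayHistory_empty_eq_history
    (hpreda : ∀ s ω, alpha s ω = f s (history P alpha lam s ω))
    (hpredl : ∀ s ω, lam s ω = g' s (history P alpha lam s ω)) (ω : Ω) (s : ℕ) :
    replayHistory f g' ∅ (fun j => P j ω) s = history P alpha lam s ω := by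
  induction s using Nat.strong_induction_on with
  | _ s ih =>
    refine Prod.ext (funext fun j => ?_) (funext fun j => ?_)
    all_goals
      simp only [replayHistory.fst_apply, replayHistory.snd_apply, history]
      by_cases hj : j < s
      · simp [hj, ih j hj, ← hpreda, ← hpredl]
      · simp [hj]

theorem replayHistory_singleton_eq_history
    (hpreda : ∀ s ω, alpha s ω = f s (history P alpha lam s ω))
    (hpredl : ∀ s ω, lam s ω = g' s (history P alpha lam s ω)) {t : ℕ} {ω : Ω}
    (halam : alpha t ω ≤ lam t ω)
    (hlt : lam t ω < P t ω) (s : ℕ) :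
    replayHistory f g' {t} (fun j => P j ω) s = history P alpha lam s ω := by
  induction s using Nat.strong_induction_on with
  | _ s ih =>
    refine Prod.ext (funext fun j => ?_) (funext fun j => ?_)
    all_goals
      simp only [replayHistory.fst_apply, replayHistory.snd_apply, history]
      by_cases hj : j < s
      · by_cases hjt : j = t
        · subst hjt
          simp [not_le.2 hlt, not_le.2 (halam.trans_lt hlt)]
        · simp [hj, hjt, ih j hj, ← hpreda, ← hpredl]
      · simp [hj]

theorem measurable_history [MeasurableSpace Ω]
    (hpreda : ∀ s ω, alpha s ω = f s (history P alpha lam s ω))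
    (hpredl : ∀ s ω, lam s ω = g' s (history P alpha lam s ω))
    (hP : ∀ j, Measurable (P j)) (s : ℕ) :
    Measurable (history P alpha lam s) := by
  have : history P alpha lam s = fun ω => replayHistory f g' ∅ (fun j => P j ω) s :=
    funext fun ω => (replayHistory_empty_eq_history hpreda hpredl ω s).symm
  rw [this]
  exact (replayHistory.measurable s).comp (measurable_pi_lambda _ hP)

theorem integrable_comp_history_prodMk [MeasurableSpace Ω] {μ : Measure Ω} [IsFiniteMeasure μ]
    (hpreda : ∀ s ω, alpha s ω = f s (history P alpha lam s ω))
    (hpredl : ∀ s ω, lam s ω = g' s (history P alpha lam s ω))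
    (hP : ∀ j, Measurable (P j)) (s s' : ℕ)
    (F : ((ℕ → Bool) × (ℕ → Bool)) × ((ℕ → Bool) × (ℕ → Bool)) → ℝ) :
    Integrable (fun ω => F (history P alpha lam s ω, history P alpha lam s' ω)) μ :=
  ((measurable_history hpreda hpredl hP s).prodMk (measurable_history hpreda hpredl hP s'))
    |>.integrable_comp_of_finite_range
      (finite_range_prodMk (finite_range_history P alpha lam s)
        (finite_range_history P alpha lam s')) F

theorem replayHistory_singleton_le_rejVector
    (hpreda : ∀ s ω, alpha s ω = f s (history P alpha lam s ω))
    (hpredl : ∀ s ω, lam s ω = g' s (history P alpha lam s ω))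
    (hfmono : ∀ s, Monotone (f s)) (hg'mono : ∀ s, Monotone (g' s)) (t T : ℕ) (ω : Ω) :
    (replayHistory f g' {t} (fun j => P j ω) T).1 ≤ rejVector P alpha T ω := by
  have := (replayHistory.antitone_mask (x := fun j => P j ω) hfmono hg'mono (empty_subset {t}) T).1
  rwa [replayHistory_empty_eq_history hpreda hpredl] at this

variable [MeasurableSpace Ω] {μ : Measure Ω} {T t : ℕ}

theorem integrable_comp_history_maskedRej [IsFiniteMeasure μ]
    (hpreda : ∀ s ω, alpha s ω = f s (history P alpha lam s ω))
    (hpredl : ∀ s ω, lam s ω = g' s (history P alpha lam s ω))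
    (hP : ∀ j, Measurable (P j)) (Φ : (ℕ → Bool) × (ℕ → Bool) → (ℕ → Bool) → ℝ) :
    Integrable (fun ω => Φ (history P alpha lam t ω)
      (replayHistory f g' {t} (fun j => P j ω) T).1) μ := by
  have hpair : Measurable fun x => (replayHistory f g' ∅ x t, replayHistory f g' {t} x T) :=
    (replayHistory.measurable t).prodMk (replayHistory.measurable T)
  have hfin : (range fun x => (replayHistory f g' ∅ x t, replayHistory f g' {t} x T)).Finite :=
    finite_range_prodMk (replayHistory.finite_range t) (replayHistory.finite_range T)
  simpa only [Function.comp_apply, replayHistory_empty_eq_history hpreda hpredl] using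
    (hpair.comp (measurable_pi_lambda _ hP)).integrable_comp_of_finite_range (μ := μ)
      (hfin.subset (range_comp_subset_range _ _)) fun p => Φ p.1 p.2.1

theorem indepFun_comp_history_maskedRej
    (hpreda : ∀ s ω, alpha s ω = f s (history P alpha lam s ω))
    (hpredl : ∀ s ω, lam s ω = g' s (history P alpha lam s ω))
    (hP : ∀ j, Measurable (P j)) (hindep : iIndepFun (fun i : Fin T => P i.1) μ) (ht : t < T)
    (Φ : (ℕ → Bool) × (ℕ → Bool) → (ℕ → Bool) → ℝ) {ζ : ℝ → ℝ} (hζ : Measurable ζ) :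
    IndepFun (fun ω => Φ (history P alpha lam t ω) (replayHistory f g' {t} (fun j => P j ω) T).1)
      (fun ω => ζ (P t ω)) μ := by
  have hpair : Measurable fun x => (replayHistory f g' ∅ x t, replayHistory f g' {t} x T) :=
    (replayHistory.measurable t).prodMk (replayHistory.measurable T)
  have hfin : (range fun x => (replayHistory f g' ∅ x t, replayHistory f g' {t} x T)).Finite :=
    finite_range_prodMk (replayHistory.finite_range t) (replayHistory.finite_range T)
  have hdep : DependsOn (fun x => Φ (replayHistory f g' ∅ x t) (replayHistory f g' {t} x T).1)
      {j | j < T ∧ j ≠ t} := fun x y hxy => by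
    have hbefore : replayHistory f g' ∅ x t = replayHistory f g' ∅ y t :=
      replayHistory.dependsOn t fun j hj => hxy j ⟨hj.1.trans ht, hj.1.ne⟩
    have hmasked : replayHistory f g' {t} x T = replayHistory f g' {t} y T :=
      replayHistory.dependsOn T fun j hj => hxy j hj
    simp only [hbefore, hmasked]
  simpa only [replayHistory_empty_eq_history hpreda hpredl] using
    hindep.indepFun_comp_of_dependsOn ht hP
      (hpair.comp_of_finite_range hfin fun p => Φ p.1 p.2.1) hdep hζ

end Predictable

theorem setIntegral_history_fiber_le {Ω : Type*} [MeasurableSpace Ω] {μ : Measure Ω}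
    [IsProbabilityMeasure μ] {T t : ℕ} (ht : t < T) {P alpha lam : ℕ → Ω → ℝ}
    (hPmeas : ∀ j, Measurable (P j)) (hindep : iIndepFun (fun i : Fin T => P i.1) μ)
    (hsu : ∀ u ∈ Icc (0 : ℝ) 1, μ {ω | P t ω ≤ u} ≤ ENNReal.ofReal u)
    (ha0 : ∀ ω, 0 ≤ alpha t ω) (hl01 : ∀ ω, lam t ω ∈ Ioo (0 : ℝ) 1)
    (halam : ∀ ω, alpha t ω ≤ lam t ω) {f g' : ℕ → (ℕ → Bool) × (ℕ → Bool) → ℝ}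
    (hpreda : ∀ s ω, alpha s ω = f s (history P alpha lam s ω))
    (hpredl : ∀ s ω, lam s ω = g' s (history P alpha lam s ω))
    (hfmono : ∀ s, Monotone (f s)) (hg'mono : ∀ s, Monotone (g' s))
    {g : (ℕ → Bool) → ℝ} (hgpos : ∀ x, 0 < g x) (hgmono : Monotone g) (ω₀ : Ω) :
    ∫ ω in history P alpha lam t ⁻¹' {history P alpha lam t ω₀},
        alpha t ω / g (rejVector P alpha T ω) ∂μ ≤
      ∫ ω in history P alpha lam t ⁻¹' {history P alpha lam t ω₀},
        alpha t ω * (if lam t ω < P t ω then (1 : ℝ) else 0) /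
          ((1 - lam t ω) * g (rejVector P alpha T ω)) ∂μ := by
  classical
  set A := history P alpha lam t ⁻¹' {history P alpha lam t ω₀}
  set a := alpha t ω₀
  set l := lam t ω₀
  have hl : 0 < 1 - l := sub_pos.2 (hl01 ω₀).2
  have hconst (ω : Ω) (hω : ω ∈ A) : alpha t ω = a ∧ lam t ω = l :=
    ⟨by rw [hpreda, hω, ← hpreda], by rw [hpredl, hω, ← hpredl]⟩
  let Φ (h : (ℕ → Bool) × (ℕ → Bool)) (r : ℕ → Bool) : ℝ :=
    if h = history P alpha lam t ω₀ then a / ((1 - l) * g r) else 0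
  have hΦ (ω : Ω) (hω : ω ∈ A) (r : ℕ → Bool) :
      Φ (history P alpha lam t ω) r = a / ((1 - l) * g r) := if_pos hω
  -- the rejection vector computed as if `P_t` had not been observed
  let maskedRej (ω : Ω) : ℕ → Bool := (replayHistory f g' {t} (fun j => P j ω) T).1
  refine setIntegral_le_setIntegral_of_indepFun
    (measurable_history hpreda hpredl hPmeas t (measurableSet_singleton _)) (hPmeas t)
    (hl01 ω₀).1.le (hsu l ⟨(hl01 ω₀).1.le, (hl01 ω₀).2.le⟩)
    (W := fun ω => Φ (history P alpha lam t ω) (maskedRej ω))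
    (integrable_comp_history_maskedRej hpreda hpredl hPmeas Φ)
    (fun ω => ?_) (fun ω hω => if_neg hω)
    (indepFun_comp_history_maskedRej hpreda hpredl hPmeas hindep ht Φ
      (measurable_const.ite measurableSet_Ioi measurable_const))
    (fun ω => div_nonneg (ha0 ω) (hgpos _).le) (fun ω hω => ?_) (fun ω hω => ?_)
  · dsimp only [Φ]
    split_ifs
    exacts [div_nonneg (ha0 ω₀) (mul_pos hl (hgpos _)).le, le_rfl]
  · have hcancel : (1 - l) * (a / ((1 - l) * g (maskedRej ω))) = a / g (maskedRej ω) := by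
      field_simp
    change alpha t ω / g (rejVector P alpha T ω) ≤
      (1 - l) * Φ (history P alpha lam t ω) (maskedRej ω)
    rw [(hconst ω hω).1, hΦ ω hω, hcancel]
    exact div_le_div_of_nonneg_left (ha0 ω₀) (hgpos _)
      (hgmono (replayHistory_singleton_le_rejVector hpreda hpredl hfmono hg'mono t T ω))
  · obtain ⟨hαω, hlamω⟩ := hconst ω hω
    change alpha t ω * (if lam t ω < P t ω then (1 : ℝ) else 0) /
      ((1 - lam t ω) * g (rejVector P alpha T ω)) =
        Φ (history P alpha lam t ω) (maskedRej ω) * if l < P t ω then 1 else 0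
    rw [hαω, hlamω, hΦ ω hω]
    split_ifs with hlt
    · have hmasked : maskedRej ω = rejVector P alpha T ω := by
        simp only [maskedRej, replayHistory_singleton_eq_history hpreda hpredl (halam ω)
          (hlamω ▸ hlt)]
        rfl
      rw [hmasked]
      ring
    · simp
theorem lemma2_first_inequality_general {Ω : Type*} [m0 : MeasurableSpace Ω]
    (μ : Measure Ω) [IsProbabilityMeasure μ]
    (T : ℕ) (P alpha lam : ℕ → Ω → ℝ) (H0 : Set ℕ)
    (hPmeas : ∀ j, Measurable (P j))
    -- the p-values `P_1, ..., P_T` are independent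
    (hindep : ProbabilityTheory.iIndepFun (m := fun _ : Fin T => (inferInstance : MeasurableSpace ℝ))
      (fun i : Fin T => P i.1) μ)
    -- each null p-value is super-uniform
    (hnull : ∀ j ∈ H0, ∀ u ∈ Set.Icc (0 : ℝ) 1, μ {ω | P j ω ≤ u} ≤ ENNReal.ofReal u)
    (ha01 : ∀ j ω, alpha j ω ∈ Set.Ioo (0 : ℝ) 1)
    (hl01 : ∀ j ω, lam j ω ∈ Set.Ioo (0 : ℝ) 1)
    (halam : ∀ j ω, alpha j ω ≤ lam j ω)
    -- predictability and monotonicity of the rules producing `α_t` and `λ_t`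
    (f g' : ℕ → (ℕ → Bool) × (ℕ → Bool) → ℝ)
    (hpreda : ∀ s ω, alpha s ω = f s (history P alpha lam s ω))
    (hpredl : ∀ s ω, lam s ω = g' s (history P alpha lam s ω))
    (hfmono : ∀ s, Monotone (f s)) (hg'mono : ∀ s, Monotone (g' s))
    -- `g` is a positive coordinatewise non-decreasing function of the rejection vector
    (g : (ℕ → Bool) → ℝ) (hgpos : ∀ x, 0 < g x) (hgmono : Monotone g)
    (t : ℕ) (ht : t < T) (htnull : t ∈ H0) :
    ∀ᵐ ω ∂μ,
      (μ[fun ω' => alpha t ω' / g (rejVector P alpha T ω') |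
          MeasurableSpace.comap (history P alpha lam t) inferInstance]) ω
        ≤ (μ[fun ω' => alpha t ω' * (if lam t ω' < P t ω' then (1 : ℝ) else 0) /
            ((1 - lam t ω') * g (rejVector P alpha T ω')) |
          MeasurableSpace.comap (history P alpha lam t) inferInstance]) ω := by
  have hlam : Measurable (lam t) := by
    simpa only [← hpredl] using (measurable_history hpreda hpredl hPmeas t).comp_of_finite_range
      (finite_range_history P alpha lam t) (g' t)
  have hint₁ := integrable_comp_history_prodMk (μ := μ) hpreda hpredl hPmeas t T
    fun h => f t h.1 / g h.2.1
  have hint₂ := (integrable_comp_history_prodMk (μ := μ) hpreda hpredl hPmeas t T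
    fun h => f t h.1 / ((1 - g' t h.1) * g h.2.1)).indicator (measurableSet_lt hlam (hPmeas t))
  refine condExp_comap_le_of_forall_fiber (measurable_history hpreda hpredl hPmeas t)
    (finite_range_history P alpha lam t) (hint₁.congr (ae_of_all _ fun ω => ?_))
    (hint₂.congr (ae_of_all _ fun ω => ?_))
    (setIntegral_history_fiber_le ht hPmeas hindep (hnull t htnull) (fun ω => (ha01 t ω).1.le)
      (hl01 t) (halam t) hpreda hpredl hfmono hg'mono hgpos hgmono)
  · dsimp only
    rw [← hpreda t ω]
    rfl
  · by_cases hlt : lam t ω < P t ω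
    · simp only [indicator, mem_ofPred_eq, hlt, if_true, mul_one, ← hpreda t ω, ← hpredl t ω]
      rfl
    · simp [indicator, hlt]

/-- Reverse super-uniformity (first inequality of Lemma 2): under independence of the
p-values `P_1, ..., P_T`, monotonicity of the rules, and super-uniformity of each null
p-value, for any coordinatewise non-decreasing positive function `g` of the rejection
vector and any null index `t < T`,
`E[α_t · 1{P_t > λ_t}/((1 − λ_t) · g(R_{1:T})) | F^{t-1}] ≥ E[α_t / g(R_{1:T}) | F^{t-1}]`
almost surely. -/
theorem lemma2_first_inequality {Ω : Type*} [m0 : MeasurableSpace Ω]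
    (μ : Measure Ω) [IsProbabilityMeasure μ]
    (T : ℕ) (P alpha lam : ℕ → Ω → ℝ) (H0 : Set ℕ)
    (hPmeas : ∀ j, Measurable (P j)) (hP01 : ∀ j ω, P j ω ∈ Set.Icc (0 : ℝ) 1)
    -- the p-values `P_1, ..., P_T` are independent
    (hindep : ProbabilityTheory.iIndepFun (m := fun _ : Fin T => (inferInstance : MeasurableSpace ℝ))
      (fun i : Fin T => P i.1) μ)
    -- each null p-value is super-uniform
    (hnull : ∀ j ∈ H0, ∀ u ∈ Set.Icc (0 : ℝ) 1, μ {ω | P j ω ≤ u} ≤ ENNReal.ofReal u)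
    (hameas : ∀ j, Measurable (alpha j)) (ha01 : ∀ j ω, alpha j ω ∈ Set.Ioo (0 : ℝ) 1)
    (hlmeas : ∀ j, Measurable (lam j)) (hl01 : ∀ j ω, lam j ω ∈ Set.Ioo (0 : ℝ) 1)
    (halam : ∀ j ω, alpha j ω ≤ lam j ω)
    -- predictability and monotonicity of the rules producing `α_t` and `λ_t`
    (f g' : ℕ → (ℕ → Bool) × (ℕ → Bool) → ℝ)
    (hpreda : ∀ s ω, alpha s ω = f s (history P alpha lam s ω))
    (hpredl : ∀ s ω, lam s ω = g' s (history P alpha lam s ω))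
    (hfmono : ∀ s, Monotone (f s)) (hg'mono : ∀ s, Monotone (g' s))
    -- `g` is a positive coordinatewise non-decreasing function of the rejection vector
    (g : (ℕ → Bool) → ℝ) (hgpos : ∀ x, 0 < g x) (hgmono : Monotone g)
    (t : ℕ) (ht : t < T) (htnull : t ∈ H0) :
    ∀ᵐ ω ∂μ,
      (μ[fun ω' => alpha t ω' / g (rejVector P alpha T ω') |
          MeasurableSpace.comap (history P alpha lam t) inferInstance]) ω
        ≤ (μ[fun ω' => alpha t ω' * (if lam t ω' < P t ω' then (1 : ℝ) else 0) /
            ((1 - lam t ω') * g (rejVector P alpha T ω')) |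
          MeasurableSpace.comap (history P alpha lam t) inferInstance]) ω :=
  lemma2_first_inequality_general (m0 := m0) μ T P alpha lam H0 hPmeas hindep hnull ha01 hl01 halam
    f g' hpreda hpredl hfmono hg'mono g hgpos hgmono t ht htnull
end

section
/- Monotonicity of the SAFFRON update rule (Lemma 1): if λ_t = h_t(α_t) for non-decreasing functions h_t: (0,1) → (0,1) with h_t(x) ≥ x, then the levels produced by the SAFFRON update rule are monotone; that is, whenever two binary histories satisfy (R_{1:t-1}, C_{1:t-1}) ≥ (R̃_{1:t-1}, C̃_{1:t-1}) coordinatewise, the corresponding levels satisfy α_t ≥ α̃_t and λ_t ≥ λ̃_t. -/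
/-- The SAFFRON wealth sum `s_t(R_{1:t-1}, C_{1:t-1})`.  With `τ_j` the index of the `j`-th
rejection (`τ_0 = 0`) and `C_{j+} = Σ_{i=τ_j+1}^{t-1} C_i`, this is
`W₀·γ_{t−C_{0+}} + (α−W₀)·γ_{t−τ_1−C_{1+}} + Σ_{j≥2} α·γ_{t−τ_j−C_{j+}}`,
written as a sum over the rejection times `i ∈ {1, ..., t-1}` with `R_i = 1`:
a rejection at time `i` contributes `(α−W₀)` (if it is the first rejection) or `α`
(otherwise) times `γ_{t − i − #{candidates in (i, t-1]}}`. -/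
noncomputable def saffronSum (q W0 : ℝ) (γ : ℕ → ℝ) (t : ℕ) (R C : ℕ → Bool) : ℝ :=
  W0 * γ (t - ((Finset.Icc 1 (t - 1)).filter fun i => C i = true).card) +
    ∑ i ∈ (Finset.Icc 1 (t - 1)).filter (fun i => R i = true),
      (if ((Finset.Icc 1 i).filter fun k => R k = true).card = 1 then q - W0 else q) *
        γ (t - i - ((Finset.Icc (i + 1) (t - 1)).filter fun k => C k = true).card)

/-!
The wealth sum `s_t` is monotone in the history: an extra rejection adds a nonnegative
term (and can only turn a first-rejection weight `α - W₀` into `α`), and an extra candidate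
shifts indices of the non-increasing sequence `γ` down. The level solves `α = (1 - h α) s`,
and since `h` is non-decreasing the solution cannot increase while `s` decreases.
-/

open Finset

theorem MonotoneOn.le_of_eq_one_sub_mul {f : ℝ → ℝ} {S : Set ℝ} (hf : MonotoneOn f S)
    (hf1 : ∀ z ∈ S, f z < 1) {x y s s' : ℝ} (hx : x ∈ S) (hy : y ∈ S) (hx0 : 0 ≤ x)
    (hss : s' ≤ s) (hxs : x = (1 - f x) * s) (hys : y = (1 - f y) * s') : y ≤ x := by
  by_contra! hxy
  have hs : 0 ≤ s := nonneg_of_mul_nonneg_right (hxs ▸ hx0) (sub_pos.2 (hf1 x hx))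
  have hyx : y ≤ x :=
    calc y = (1 - f y) * s' := hys
      _ ≤ (1 - f y) * s := mul_le_mul_of_nonneg_left hss (sub_nonneg.2 (hf1 y hy).le)
      _ ≤ (1 - f x) * s := mul_le_mul_of_nonneg_right (by linarith [hf hx hy hxy.le]) hs
      _ = x := hxs.symm
  linarith

def trueCount (P : ℕ → Bool) (a b : ℕ) : ℕ := #{k ∈ Icc a b | P k = true}

theorem trueCount_mono {P Q : ℕ → Bool} (hPQ : ∀ i, P i = true → Q i = true) (a b : ℕ) :
    trueCount P a b ≤ trueCount Q a b :=
  card_le_card (monotone_filter_right _ fun i _ => hPQ i)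

theorem trueCount_le (P : ℕ → Bool) (a b : ℕ) : trueCount P a b ≤ b + 1 - a :=
  (card_filter_le _ _).trans (Nat.card_Icc a b).le

theorem one_le_trueCount {P : ℕ → Bool} {i : ℕ} (hi : 1 ≤ i) (hPi : P i = true) :
    1 ≤ trueCount P 1 i :=
  card_pos.2 ⟨i, mem_filter.2 ⟨mem_Icc.2 ⟨hi, le_rfl⟩, hPi⟩⟩

theorem saffronSum_eq_trueCount (q W0 : ℝ) (γ : ℕ → ℝ) (t : ℕ) (R C : ℕ → Bool) :
    saffronSum q W0 γ t R C =
      W0 * γ (t - trueCount C 1 (t - 1)) +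
        ∑ i ∈ (Icc 1 (t - 1)).filter (fun i => R i = true),
          (if trueCount R 1 i = 1 then q - W0 else q) * γ (t - i - trueCount C (i + 1) (t - 1)) :=
  rfl

theorem gamma_le_of_candidates {γ : ℕ → ℝ} (hγanti : ∀ j k, 1 ≤ j → j ≤ k → γ k ≤ γ j)
    {C C' : ℕ → Bool} (hC : ∀ i, C' i = true → C i = true) (t i : ℕ) :
    γ (t - i - trueCount C' (i + 1) (t - 1)) ≤ γ (t - i - trueCount C (i + 1) (t - 1)) := by
  have hcount := trueCount_mono hC (i + 1) (t - 1)
  have hbound := trueCount_le C (i + 1) (t - 1)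
  -- for `i ≥ t` both indices are `0`; otherwise both are at least `1`
  rcases lt_or_ge i t with hit | hti
  · exact hγanti _ _ (by omega) (by omega)
  · have h0 : t - i = 0 := by omega
    simp only [h0, Nat.zero_sub, le_refl]

theorem firstRejectionWeight_le {q W0 : ℝ} (hW0 : 0 ≤ W0) {n m : ℕ} (hn : 1 ≤ n)
    (hnm : n ≤ m) :
    (if n = 1 then q - W0 else q) ≤ (if m = 1 then q - W0 else q) := by
  split_ifs <;> first | omega | linarith

theorem firstRejectionWeight_nonneg {q W0 : ℝ} (hW0 : 0 ≤ W0) (hW0q : W0 ≤ q) (n : ℕ) :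
    0 ≤ (if n = 1 then q - W0 else q) := by
  split_ifs <;> linarith

theorem saffronSum_mono {q W0 : ℝ} (hW0 : 0 ≤ W0) (hW0q : W0 ≤ q) {γ : ℕ → ℝ}
    (hγ : ∀ j, 1 ≤ j → 0 ≤ γ j) (hγanti : ∀ j k, 1 ≤ j → j ≤ k → γ k ≤ γ j) (t : ℕ)
    {R C R' C' : ℕ → Bool} (hR : ∀ i, R' i = true → R i = true)
    (hC : ∀ i, C' i = true → C i = true) :
    saffronSum q W0 γ t R' C' ≤ saffronSum q W0 γ t R C := by
  rw [saffronSum_eq_trueCount, saffronSum_eq_trueCount]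
  have hγ_term : ∀ i ∈ Icc 1 (t - 1), ∀ D : ℕ → Bool,
      0 ≤ γ (t - i - trueCount D (i + 1) (t - 1)) := fun i hi D => by
    have := trueCount_le D (i + 1) (t - 1)
    exact hγ _ (by grind)
  refine add_le_add (mul_le_mul_of_nonneg_left ?_ hW0) ?_
  · simpa using gamma_le_of_candidates hγanti hC t 0
  · calc _ ≤ ∑ i ∈ (Icc 1 (t - 1)).filter (fun i => R' i = true),
            (if trueCount R 1 i = 1 then q - W0 else q) *
              γ (t - i - trueCount C (i + 1) (t - 1)) := by
          refine sum_le_sum fun i hi => ?_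
          obtain ⟨hi, hR'i⟩ := mem_filter.1 hi
          exact mul_le_mul
            (firstRejectionWeight_le hW0 (one_le_trueCount (mem_Icc.1 hi).1 hR'i)
              (trueCount_mono hR 1 i))
            (gamma_le_of_candidates hγanti hC t i) (hγ_term i hi C')
            (firstRejectionWeight_nonneg hW0 hW0q _)
      _ ≤ _ := sum_le_sum_of_subset_of_nonneg (monotone_filter_right _ fun i _ => hR i)
          fun i hi _ => mul_nonneg (firstRejectionWeight_nonneg hW0 hW0q _)
            (hγ_term i (mem_filter.1 hi).1 C)

theorem saffron_update_monotone_general (q W0 : ℝ)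
    (hW0pos : 0 < W0) (hW0le : W0 ≤ q)
    (γ : ℕ → ℝ) (hγpos : ∀ j, 1 ≤ j → 0 < γ j)
    (hγanti : ∀ j k, 1 ≤ j → j ≤ k → γ k ≤ γ j)
    (t : ℕ)
    -- the function `h_t : (0,1) → (0,1)`, non-decreasing and satisfying `h_t(x) ≥ x`
    (h : ℝ → ℝ) (hmap : ∀ x ∈ Set.Ioo (0 : ℝ) 1, h x ∈ Set.Ioo (0 : ℝ) 1)
    (hmono : MonotoneOn h (Set.Ioo (0 : ℝ) 1))
    -- two coordinatewise-ordered binary histories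
    (R C R' C' : ℕ → Bool)
    (hR : ∀ i, R' i = true → R i = true) (hC : ∀ i, C' i = true → C i = true)
    -- the levels `α_t` and `α̃_t` produced by the SAFFRON update rule, with `λ_t = h_t(α_t)`
    (a a' : ℝ) (ha : a ∈ Set.Ioo (0 : ℝ) 1) (ha' : a' ∈ Set.Ioo (0 : ℝ) 1)
    (heq : a = (1 - h a) * saffronSum q W0 γ t R C)
    (heq' : a' = (1 - h a') * saffronSum q W0 γ t R' C') :
    a' ≤ a ∧ h a' ≤ h a := by
  have hs := saffronSum_mono hW0pos.le hW0le (fun j hj => (hγpos j hj).le) hγanti t hR hC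
  have hle : a' ≤ a :=
    hmono.le_of_eq_one_sub_mul (fun x hx => (hmap x hx).2) ha ha' ha.1.le hs heq heq'
  exact ⟨hle, hmono ha' ha hle⟩

/-- Lemma 1 (monotonicity of the SAFFRON update rule): if `λ_t = h_t(α_t)` for a
non-decreasing function `h_t : (0,1) → (0,1)` with `h_t(x) ≥ x`, then the levels produced
by the SAFFRON update rule `α_t = (1 − h_t(α_t)) · s_t(R_{1:t-1}, C_{1:t-1})` are monotone:
whenever two binary histories satisfy `(R_{1:t-1}, C_{1:t-1}) ≥ (R̃_{1:t-1}, C̃_{1:t-1})`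
coordinatewise, the corresponding levels satisfy `α_t ≥ α̃_t` and `λ_t ≥ λ̃_t`. -/
theorem saffron_update_monotone (q W0 : ℝ) (hq : q ∈ Set.Ioo (0 : ℝ) 1)
    (hW0pos : 0 < W0) (hW0le : W0 ≤ q)
    (γ : ℕ → ℝ) (hγpos : ∀ j, 1 ≤ j → 0 < γ j)
    (hγanti : ∀ j k, 1 ≤ j → j ≤ k → γ k ≤ γ j)
    (hγsum : ∑' j : ℕ, γ (j + 1) = 1)
    (t : ℕ)
    -- the function `h_t : (0,1) → (0,1)`, non-decreasing and satisfying `h_t(x) ≥ x`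
    (h : ℝ → ℝ) (hmap : ∀ x ∈ Set.Ioo (0 : ℝ) 1, h x ∈ Set.Ioo (0 : ℝ) 1)
    (hmono : MonotoneOn h (Set.Ioo (0 : ℝ) 1))
    (hge : ∀ x ∈ Set.Ioo (0 : ℝ) 1, x ≤ h x)
    -- two coordinatewise-ordered binary histories
    (R C R' C' : ℕ → Bool)
    (hR : ∀ i, R' i = true → R i = true) (hC : ∀ i, C' i = true → C i = true)
    -- the levels `α_t` and `α̃_t` produced by the SAFFRON update rule, with `λ_t = h_t(α_t)`
    (a a' : ℝ) (ha : a ∈ Set.Ioo (0 : ℝ) 1) (ha' : a' ∈ Set.Ioo (0 : ℝ) 1)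
    (heq : a = (1 - h a) * saffronSum q W0 γ t R C)
    (heq' : a' = (1 - h a') * saffronSum q W0 γ t R' C') :
    a' ≤ a ∧ h a' ≤ h a :=
  saffron_update_monotone_general q W0 hW0pos hW0le γ hγpos hγanti t h hmap hmono R C R' C' hR hC a
    a' ha ha' heq heq'
end

section
/- The SAFFRON wealth sum is coordinatewise non-decreasing in the history: for fixed t, target level α ∈ (0,1), initial wealth 0 < W_0 ≤ α, and positive non-increasing sequence {γ_j}, if two binary histories satisfy (R_{1:t-1}, C_{1:t-1}) ≥ (R̃_{1:t-1}, C̃_{1:t-1}) coordinatewise, then s_t(R_{1:t-1}, C_{1:t-1}) ≥ s_t(R̃_{1:t-1}, C̃_{1:t-1}). -/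
open Finset

lemma card_filter_Icc_le (p : ℕ → Prop) [DecidablePred p] (a b : ℕ) :
    ((Icc a b).filter p).card ≤ b + 1 - a :=
  (card_filter_le _ _).trans_eq (Nat.card_Icc a b)

lemma card_filter_le_card_filter {α : Type*} (s : Finset α) {p q : α → Prop}
    [DecidablePred p] [DecidablePred q] (h : ∀ a, p a → q a) :
    (s.filter p).card ≤ (s.filter q).card :=
  card_le_card (monotone_filter_right s fun a _ => h a)

lemma AntitoneOn.apply_sub_le_apply_sub {γ : ℕ → ℝ} (hγ : AntitoneOn γ (Set.Ici 1))
    {n a b : ℕ} (hab : a ≤ b) (hb : b ≤ n - 1) : γ (n - a) ≤ γ (n - b) := by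
  obtain h | h : n - a = n - b ∨ 1 ≤ n - b := by omega
  · rw [h]
  · exact hγ (Set.mem_Ici.mpr h) (Set.mem_Ici.mpr (by omega)) (by omega)

section Weights

variable {q W0 : ℝ}

lemma ite_sub_nonneg (hW0 : 0 ≤ W0) (hW0q : W0 ≤ q) (P : Prop) [Decidable P] :
    0 ≤ if P then q - W0 else q := by
  split_ifs <;> linarith

lemma ite_card_eq_one_mono (hW0 : 0 ≤ W0) {m n : ℕ} (hm : 1 ≤ m) (hmn : m ≤ n) :
    (if m = 1 then q - W0 else q) ≤ if n = 1 then q - W0 else q := by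
  split_ifs <;> first | linarith | omega

end Weights

section Monotonicity

variable {q W0 : ℝ} {γ : ℕ → ℝ} {t : ℕ}

lemma saffronSum_le_of_candidates_le (hW0 : 0 ≤ W0) (hW0q : W0 ≤ q)
    (hγ : AntitoneOn γ (Set.Ici 1)) (R : ℕ → Bool) {C C' : ℕ → Bool}
    (hC : ∀ i, C' i = true → C i = true) :
    saffronSum q W0 γ t R C' ≤ saffronSum q W0 γ t R C := by
  unfold saffronSum
  gcongr with i hi
  · exact hγ.apply_sub_le_apply_sub (card_filter_le_card_filter _ hC)
      ((card_filter_Icc_le _ _ _).trans (by omega))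
  · exact ite_sub_nonneg hW0 hW0q _
  · have hi := mem_Icc.mp (mem_filter.mp hi).1
    exact hγ.apply_sub_le_apply_sub (card_filter_le_card_filter _ hC)
      ((card_filter_Icc_le _ _ _).trans (by omega))

lemma saffronSum_le_of_rejections_le (hW0 : 0 ≤ W0) (hW0q : W0 ≤ q)
    (hγ : ∀ j, 1 ≤ j → 0 ≤ γ j) {R R' : ℕ → Bool} (C : ℕ → Bool)
    (hR : ∀ i, R' i = true → R i = true) :
    saffronSum q W0 γ t R' C ≤ saffronSum q W0 γ t R C := by
  unfold saffronSum
  gcongr 1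
  set c : ℕ → ℕ := fun i => ((Icc (i + 1) (t - 1)).filter fun k => C k = true).card
  have hγc : ∀ i ∈ Icc 1 (t - 1), 0 ≤ γ (t - i - c i) := fun i hi => by
    have := card_filter_Icc_le (C · = true) (i + 1) (t - 1)
    exact hγ _ (by simp only [mem_Icc, c] at hi ⊢; omega)
  calc ∑ i ∈ (Icc 1 (t - 1)).filter (R' · = true),
        (if ((Icc 1 i).filter (R' · = true)).card = 1 then q - W0 else q) * γ (t - i - c i)
      ≤ ∑ i ∈ (Icc 1 (t - 1)).filter (R' · = true),
        (if ((Icc 1 i).filter (R · = true)).card = 1 then q - W0 else q) * γ (t - i - c i) := by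
        refine sum_le_sum fun i hi => ?_
        obtain ⟨hi, hR'i⟩ := mem_filter.mp hi
        have hfirst : 1 ≤ ((Icc 1 i).filter (R' · = true)).card :=
          card_pos.mpr ⟨i, mem_filter.mpr ⟨mem_Icc.mpr ⟨(mem_Icc.mp hi).1, le_rfl⟩, hR'i⟩⟩
        exact mul_le_mul_of_nonneg_right
          (ite_card_eq_one_mono hW0 hfirst (card_filter_le_card_filter _ hR)) (hγc i hi)
    _ ≤ ∑ i ∈ (Icc 1 (t - 1)).filter (R · = true),
        (if ((Icc 1 i).filter (R · = true)).card = 1 then q - W0 else q) * γ (t - i - c i) :=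
        sum_le_sum_of_subset_of_nonneg (monotone_filter_right _ fun i _ => hR i)
          fun i hi _ => mul_nonneg (ite_sub_nonneg hW0 hW0q _) (hγc i (mem_filter.mp hi).1)

end Monotonicity

theorem saffronSum_monotone_general (q W0 : ℝ)
    (hW0pos : 0 < W0) (hW0le : W0 ≤ q)
    (γ : ℕ → ℝ) (hγpos : ∀ j, 1 ≤ j → 0 < γ j)
    (hγanti : ∀ j k, 1 ≤ j → j ≤ k → γ k ≤ γ j)
    (t : ℕ) (R C R' C' : ℕ → Bool)
    (hR : ∀ i, R' i = true → R i = true) (hC : ∀ i, C' i = true → C i = true) :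
    saffronSum q W0 γ t R' C' ≤ saffronSum q W0 γ t R C :=
  calc saffronSum q W0 γ t R' C'
      ≤ saffronSum q W0 γ t R' C :=
        saffronSum_le_of_candidates_le hW0pos.le hW0le
          (fun j hj _ _ hjk => hγanti j _ hj hjk) R' hC
    _ ≤ saffronSum q W0 γ t R C :=
        saffronSum_le_of_rejections_le hW0pos.le hW0le (fun j hj => (hγpos j hj).le) C hR

/-- The SAFFRON wealth sum is coordinatewise non-decreasing in the history: if two binary
histories satisfy `(R_{1:t-1}, C_{1:t-1}) ≥ (R̃_{1:t-1}, C̃_{1:t-1})` coordinatewise, then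
`s_t(R_{1:t-1}, C_{1:t-1}) ≥ s_t(R̃_{1:t-1}, C̃_{1:t-1})`. -/
theorem saffronSum_monotone (q W0 : ℝ) (hq : q ∈ Set.Ioo (0 : ℝ) 1)
    (hW0pos : 0 < W0) (hW0le : W0 ≤ q)
    (γ : ℕ → ℝ) (hγpos : ∀ j, 1 ≤ j → 0 < γ j)
    (hγanti : ∀ j k, 1 ≤ j → j ≤ k → γ k ≤ γ j)
    (t : ℕ) (R C R' C' : ℕ → Bool)
    (hR : ∀ i, R' i = true → R i = true) (hC : ∀ i, C' i = true → C i = true) :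
    saffronSum q W0 γ t R' C' ≤ saffronSum q W0 γ t R C :=
  saffronSum_monotone_general q W0 hW0pos hW0le γ hγpos hγanti t R C R' C' hR hC
end
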